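/- arXiv:1901.09559 — 4 statements merged into one kernel-verified Lean document; each statement's English description precedes it below -/
import Mathlib

section
/- Suppose ω : [0,∞) → [0,1] is continuously differentiable, ρ* > 0, and snr satisfies snr = ρ*/(1 − β·ρ*·ω(ρ*)) with 1 − β·ρ·ω(ρ) > 0 for all ρ in [0, ρ*]. Then ∫₀^{snr} (ρ(s)·ω(ρ(s))/s) ds, computed by substituting s = ρ/(1 − β·ρ·ω(ρ)), equals β⁻¹[ρ*/snr − log(ρ*/snr) − 1] + ∫₀^{ρ*} ω(ρ) dρ. -/
/-! The fixed-point equation reads `ρ(s) = s (1 - β ρ(s) ω(ρ(s)))`. Hence the integrand is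
`ω(ρ) (1 - β ρ ω(ρ))` evaluated at `ρ = ρ(s)`, and `s ↦ ρ(s)` is inverted by the explicit map
`h(ρ) = ρ / (1 - β ρ ω(ρ))`; it is onto `(0, ρ*]` by the intermediate value theorem, since the
fixed-point relation extends by continuity to `ρ(0) = 0`. Substituting `s = h(ρ)` gives
`∫₀^{ρ*} (ω + β ρ² ω ω') / (1 - β ρ ω) dρ`, whose antiderivative is
`-ρ ω(ρ) - β⁻¹ log (1 - β ρ ω(ρ)) + ∫₀^ρ ω`; finally `1 - β ρ* ω(ρ*) = ρ*/snr`. -/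

open Set intervalIntegral

theorem integral_comp_of_leftInvOn {a b : ℝ} {s : Set ℝ} {h h' φ F : ℝ → ℝ}
    (hh : ∀ x ∈ uIcc a b, HasDerivAt h (h' x) x) (hh' : ContinuousOn h' (uIcc a b))
    (hmaps : MapsTo h (uIcc a b) s) (hF : ContinuousOn (fun y ↦ F (φ y)) s)
    (hinv : LeftInvOn φ h (uIoc a b)) :
    ∫ y in h a..h b, F (φ y) = ∫ x in a..b, h' x * F x := by
  rw [← integral_comp_mul_deriv' hh hh' (hF.mono hmaps.image_subset)]
  refine integral_congr_ae (MeasureTheory.ae_of_all _ fun x hx ↦ ?_)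
  simp only [Function.comp_apply, hinv hx, mul_comm]

section CapacityIntegral

variable {β : ℝ} {ω : ℝ → ℝ}

theorem hasDerivAt_one_sub_mul_mul {ρ w : ℝ} (hω : HasDerivAt ω w ρ) :
    HasDerivAt (fun x ↦ 1 - β * x * ω x) (-(β * (ω ρ + ρ * w))) ρ := by
  have := (((hasDerivAt_id ρ).mul hω).const_mul β).const_sub 1
  simpa [mul_assoc] using this

theorem hasDerivAt_div_one_sub_mul_mul {ρ w : ℝ} (hω : HasDerivAt ω w ρ)
    (hD : 1 - β * ρ * ω ρ ≠ 0) :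
    HasDerivAt (fun x ↦ x / (1 - β * x * ω x))
      ((1 + β * ρ ^ 2 * w) / (1 - β * ρ * ω ρ) ^ 2) ρ := by
  refine ((hasDerivAt_id' ρ).div (hasDerivAt_one_sub_mul_mul hω) hD).congr_deriv ?_
  ring

theorem integral_capacity_integrand (hβ : β ≠ 0) (hω : ContDiff ℝ 1 ω) {a : ℝ}
    (hD : ∀ ρ ∈ uIcc 0 a, 1 - β * ρ * ω ρ ≠ 0) :
    ∫ ρ in 0..a, (ω ρ + β * ρ ^ 2 * ω ρ * deriv ω ρ) / (1 - β * ρ * ω ρ)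
      = -(a * ω a) - β⁻¹ * Real.log (1 - β * a * ω a) + ∫ ρ in 0..a, ω ρ := by
  have hωc : Continuous ω := hω.continuous
  have hω' : ∀ ρ, HasDerivAt ω (deriv ω ρ) ρ :=
    fun ρ ↦ (hω.differentiable one_ne_zero ρ).hasDerivAt
  have hω'c : Continuous (deriv ω) := hω.continuous_deriv le_rfl
  set G : ℝ → ℝ := fun ρ ↦ -(ρ * ω ρ) - β⁻¹ * Real.log (1 - β * ρ * ω ρ) + ∫ t in 0..ρ, ω t
  have hG0 : G 0 = 0 := by simp [G]
  suffices h : ∫ ρ in 0..a, (ω ρ + β * ρ ^ 2 * ω ρ * deriv ω ρ) / (1 - β * ρ * ω ρ)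
      = G a - G 0 by rw [h, hG0, sub_zero]
  refine integral_eq_sub_of_hasDerivAt (fun ρ hρ ↦ ?_) ?_
  · have hG : HasDerivAt G (-(1 * ω ρ + ρ * deriv ω ρ)
        - β⁻¹ * (-(β * (ω ρ + ρ * deriv ω ρ)) / (1 - β * ρ * ω ρ)) + ω ρ) ρ :=
      (((hasDerivAt_id' ρ).mul (hω' ρ)).neg.sub
        (((hasDerivAt_one_sub_mul_mul (hω' ρ)).log (hD ρ hρ)).const_mul β⁻¹)).add
        (integral_hasDerivAt_right (hωc.intervalIntegrable 0 ρ)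
          (hωc.stronglyMeasurableAtFilter _ _) hωc.continuousAt)
    refine hG.congr_deriv ?_
    linear_combination (1 - β * ρ * ω ρ)⁻¹ * (ω ρ + ρ * deriv ω ρ) * mul_inv_cancel₀ hβ
      + ρ * deriv ω ρ * mul_inv_cancel₀ (hD ρ hρ)
  · exact (ContinuousOn.div (by fun_prop) (by fun_prop) hD).intervalIntegrable

end CapacityIntegral

theorem eq_mul_one_sub_of_eq_one_div {β ρ s w : ℝ} (hρ : ρ ≠ 0) (hs : s ≠ 0)
    (h : ρ = 1 / (s⁻¹ + β * w)) : ρ = s * (1 - β * ρ * w) := by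
  have hden : s⁻¹ + β * w ≠ 0 := fun h0 ↦ hρ (by rw [h, h0, div_zero])
  linear_combination s * (eq_div_iff hden).1 h - ρ * mul_inv_cancel₀ hs

section FixedPoint

variable {β snr : ℝ} {ω ρfun : ℝ → ℝ}

theorem fixedPoint_zero (hω : Continuous ω) (hsnr : 0 < snr)
    (hcont : ContinuousOn ρfun (Icc 0 snr))
    (hfix : ∀ s ∈ Ioc 0 snr, ρfun s = s * (1 - β * ρfun s * ω (ρfun s))) :
    ρfun 0 = 0 := by
  have hcont' : ContinuousOn (fun s ↦ s * (1 - β * ρfun s * ω (ρfun s))) (Icc 0 snr) :=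
    continuousOn_id.mul (continuousOn_const.sub
      ((continuousOn_const.mul hcont).mul (hω.comp_continuousOn hcont)))
  simpa using EqOn.of_subset_closure hfix hcont hcont' Ioc_subset_Icc_self
    (closure_Ioc hsnr.ne).ge (left_mem_Icc.2 hsnr.le)

theorem mapsTo_and_leftInvOn_of_fixedPoint (hω : Continuous ω) (hsnr : 0 < snr)
    (hcont : ContinuousOn ρfun (Icc 0 snr))
    (hfix : ∀ s ∈ Ioc 0 snr, ρfun s = s * (1 - β * ρfun s * ω (ρfun s))) :
    MapsTo (fun ρ ↦ ρ / (1 - β * ρ * ω ρ)) (Icc 0 (ρfun snr)) (Icc 0 snr) ∧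
      LeftInvOn ρfun (fun ρ ↦ ρ / (1 - β * ρ * ω ρ)) (Ioc 0 (ρfun snr)) := by
  have hinv : ∀ ρ ∈ Ioc 0 (ρfun snr),
      ρ / (1 - β * ρ * ω ρ) ∈ Ioc 0 snr ∧ ρfun (ρ / (1 - β * ρ * ω ρ)) = ρ := by
    intro ρ hρ
    have hzero := fixedPoint_zero hω hsnr hcont hfix
    have hIVT := intermediate_value_Icc hsnr.le hcont
    rw [hzero] at hIVT
    obtain ⟨s, hs, rfl⟩ := hIVT (Ioc_subset_Icc_self hρ)
    have hs : s ∈ Ioc 0 snr := ⟨hs.1.lt_of_ne fun h0 ↦ hρ.1.ne' (h0 ▸ hzero), hs.2⟩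
    have hD : 1 - β * ρfun s * ω (ρfun s) ≠ 0 := fun h0 ↦
      hρ.1.ne' (by simpa [h0] using hfix s hs)
    rw [(div_eq_iff hD).2 (hfix s hs)]
    exact ⟨hs, rfl⟩
  refine ⟨fun ρ hρ ↦ ?_, fun ρ hρ ↦ (hinv ρ hρ).2⟩
  rcases hρ.1.eq_or_lt with rfl | hρ0
  · simpa using hsnr.le
  · exact Ioc_subset_Icc_self (hinv ρ ⟨hρ0, hρ.2⟩).1

end FixedPoint

theorem stmt3_general (β snr ρstar : ℝ) (ω ρfun : ℝ → ℝ)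
    (hβ : 0 < β) (hρstar : 0 < ρstar)
    (hω : ContDiff ℝ 1 ω)
    (hsnr : snr = ρstar / (1 - β * ρstar * ω ρstar))
    (hpos : ∀ ρ ∈ Set.Icc (0 : ℝ) ρstar, 0 < 1 - β * ρ * ω ρ)
    (hfix : ∀ s ∈ Set.Ioc (0 : ℝ) snr, ρfun s = 1 / (s⁻¹ + β * ω (ρfun s)))
    (hρsnr : ρfun snr = ρstar)
    (hsmooth : ContinuousOn ρfun (Set.Icc (0 : ℝ) snr))
    (hmaps : ∀ s ∈ Set.Ioc (0 : ℝ) snr, ρfun s ∈ Set.Ioc (0 : ℝ) ρstar) :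
    ∫ s in (0 : ℝ)..snr, ρfun s * ω (ρfun s) / s
      = β⁻¹ * (ρstar / snr - Real.log (ρstar / snr) - 1)
        + ∫ ρ in (0 : ℝ)..ρstar, ω ρ := by
  have hωc : Continuous ω := hω.continuous
  have hω'c : Continuous (deriv ω) := hω.continuous_deriv le_rfl
  have hD : ∀ ρ ∈ uIcc 0 ρstar, 1 - β * ρ * ω ρ ≠ 0 :=
    fun ρ hρ ↦ (hpos ρ (uIcc_of_le hρstar.le ▸ hρ)).ne'
  have hsnrpos : 0 < snr := hsnr ▸ div_pos hρstar (hpos _ (right_mem_Icc.2 hρstar.le))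
  have hfix' : ∀ s ∈ Ioc 0 snr, ρfun s = s * (1 - β * ρfun s * ω (ρfun s)) :=
    fun s hs ↦ eq_mul_one_sub_of_eq_one_div (hmaps s hs).1.ne' hs.1.ne' (hfix s hs)
  obtain ⟨hmapsTo, hinv⟩ := mapsTo_and_leftInvOn_of_fixedPoint hωc hsnrpos hsmooth hfix'
  rw [hρsnr, ← uIcc_of_le hρstar.le] at hmapsTo
  rw [hρsnr, ← uIoc_of_le hρstar.le] at hinv
  calc ∫ s in 0..snr, ρfun s * ω (ρfun s) / s
      = ∫ s in 0..snr, ω (ρfun s) * (1 - β * ρfun s * ω (ρfun s)) := by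
        refine integral_congr_ae (MeasureTheory.ae_of_all _ fun s hs ↦ ?_)
        rw [uIoc_of_le hsnrpos.le] at hs
        rw [div_eq_iff hs.1.ne']
        linear_combination ω (ρfun s) * hfix' s hs
    _ = ∫ ρ in 0..ρstar, (1 + β * ρ ^ 2 * deriv ω ρ) / (1 - β * ρ * ω ρ) ^ 2
          * (ω ρ * (1 - β * ρ * ω ρ)) := by
        convert integral_comp_of_leftInvOn (F := fun ρ ↦ ω ρ * (1 - β * ρ * ω ρ))
          (fun ρ hρ ↦ hasDerivAt_div_one_sub_mul_mul
            ((hω.differentiable one_ne_zero ρ).hasDerivAt) (hD ρ hρ))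
          (ContinuousOn.div (by fun_prop) (by fun_prop) fun ρ hρ ↦ pow_ne_zero 2 (hD ρ hρ))
          hmapsTo (by fun_prop) hinv using 2
        exact (zero_div _).symm
    _ = ∫ ρ in 0..ρstar, (ω ρ + β * ρ ^ 2 * ω ρ * deriv ω ρ) / (1 - β * ρ * ω ρ) :=
        integral_congr fun ρ hρ ↦ by field_simp [hD ρ hρ]
    _ = _ := by
        rw [integral_capacity_integrand hβ.ne' hω hD, hsnr, div_div_cancel₀ hρstar.ne']
        linear_combination ρstar * ω ρstar * mul_inv_cancel₀ hβ.ne'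

/-- Change of variables in the constrained capacity integral.
With `ω : [0,∞) → [0,1]` C¹, `ρ* > 0`, `snr = ρ*/(1 − β ρ* ω(ρ*))`,
`1 − β ρ ω(ρ) > 0` on `[0, ρ*]`, and `ρ(s)` the fixed point
`ρ(s) = 1/(s⁻¹ + β ω(ρ(s)))` (smooth, monotone, `ρ(snr) = ρ*`), one has
`∫₀^{snr} ρ(s) ω(ρ(s))/s ds = β⁻¹[ρ*/snr − log(ρ*/snr) − 1] + ∫₀^{ρ*} ω`. -/
theorem stmt3 (β snr ρstar : ℝ) (ω ρfun : ℝ → ℝ)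
    (hβ : 0 < β) (hρstar : 0 < ρstar) (hsnrpos : 0 < snr)
    (hω : ContDiff ℝ 1 ω)
    (hω01 : ∀ x : ℝ, 0 ≤ x → ω x ∈ Set.Icc (0 : ℝ) 1)
    (hsnr : snr = ρstar / (1 - β * ρstar * ω ρstar))
    (hpos : ∀ ρ ∈ Set.Icc (0 : ℝ) ρstar, 0 < 1 - β * ρ * ω ρ)
    (hfix : ∀ s ∈ Set.Ioc (0 : ℝ) snr, ρfun s = 1 / (s⁻¹ + β * ω (ρfun s)))
    (hρsnr : ρfun snr = ρstar)
    (hmono : StrictMonoOn ρfun (Set.Ioc (0 : ℝ) snr))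
    (hsmooth : ContinuousOn ρfun (Set.Icc (0 : ℝ) snr))
    (hmaps : ∀ s ∈ Set.Ioc (0 : ℝ) snr, ρfun s ∈ Set.Ioc (0 : ℝ) ρstar) :
    ∫ s in (0 : ℝ)..snr, ρfun s * ω (ρfun s) / s
      = β⁻¹ * (ρstar / snr - Real.log (ρstar / snr) - 1)
        + ∫ ρ in (0 : ℝ)..ρstar, ω ρ :=
  stmt3_general β snr ρstar ω ρfun hβ hρstar hω hsnr hpos hfix hρsnr hsmooth hmaps
end

section
/- For a continuously differentiable function ω : [0, ρ*] → ℝ with 1 − β·ρ·ω(ρ) > 0 on [0, ρ*], the following integral identity holds: ∫₀^{ρ*} (ω(ρ) + β·ρ²·ω(ρ)·ω′(ρ))/(1 − β·ρ·ω(ρ)) dρ = −ρ*·ω(ρ*) − β⁻¹·log(1 − β·ρ*·ω(ρ*)) + ∫₀^{ρ*} ω(ρ) dρ. -/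
/-!
The integrand minus `ω` is the derivative of `G(ρ) = -ρ ω(ρ) - β⁻¹ log (1 - β ρ ω(ρ))`:
both equal `β ρ ω (ω + ρ ω′) / (1 - β ρ ω)`. The identity is the fundamental theorem of
calculus for `G`, together with `G(0) = 0`.
-/

open Real Set intervalIntegral

noncomputable def logPotential (β : ℝ) (ω : ℝ → ℝ) (ρ : ℝ) : ℝ :=
  -(ρ * ω ρ) - β⁻¹ * log (1 - β * ρ * ω ρ)

lemma hasDerivAt_logPotential {β ρ dω : ℝ} {ω : ℝ → ℝ} (hβ : β ≠ 0)
    (hω : HasDerivAt ω dω ρ) (hu : 1 - β * ρ * ω ρ ≠ 0) :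
    HasDerivAt (logPotential β ω)
      ((ω ρ + β * ρ ^ 2 * ω ρ * dω) / (1 - β * ρ * ω ρ) - ω ρ) ρ := by
  have hprod : HasDerivAt (fun x => x * ω x) (ω ρ + ρ * dω) ρ := by
    simpa using (hasDerivAt_id ρ).fun_mul hω
  have hu' : HasDerivAt (fun x => 1 - β * x * ω x) (-(β * (ω ρ + ρ * dω))) ρ := by
    simpa [mul_assoc] using (hprod.const_mul β).const_sub 1
  refine (hprod.fun_neg.fun_sub ((hu'.log hu).const_mul β⁻¹)).congr_deriv ?_
  rw [neg_div, mul_neg, ← mul_div_assoc, inv_mul_cancel_left₀ hβ, sub_neg_eq_add, neg_add_eq_sub,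
    div_sub' hu, div_sub' hu]
  ring

lemma integral_div_eq_logPotential_sub_add_integral {β a b : ℝ} {ω : ℝ → ℝ} (hβ : β ≠ 0)
    (hω : ContDiff ℝ 1 ω) (hu : ∀ ρ ∈ uIcc a b, 1 - β * ρ * ω ρ ≠ 0) :
    ∫ ρ in a..b, (ω ρ + β * ρ ^ 2 * ω ρ * deriv ω ρ) / (1 - β * ρ * ω ρ)
      = logPotential β ω b - logPotential β ω a + ∫ ρ in a..b, ω ρ := by
  have hωc : Continuous ω := hω.continuous
  have hω'c : Continuous (deriv ω) := hω.continuous_deriv le_rfl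
  have hf : IntervalIntegrable
      (fun ρ => (ω ρ + β * ρ ^ 2 * ω ρ * deriv ω ρ) / (1 - β * ρ * ω ρ)) MeasureTheory.volume a b :=
    ContinuousOn.intervalIntegrable <| ContinuousOn.div (by fun_prop) (by fun_prop) hu
  have hftc := integral_eq_sub_of_hasDerivAt
    (fun ρ hρ => hasDerivAt_logPotential hβ
      ((hω.differentiable one_ne_zero ρ).hasDerivAt) (hu ρ hρ))
    (hf.sub (hωc.intervalIntegrable a b))
  rw [integral_sub hf (hωc.intervalIntegrable a b)] at hftc
  linarith

/-- Key integral identity of Lemma 2: for C¹ `ω` with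
`1 − β ρ ω(ρ) > 0` on `[0, ρ*]`,
`∫₀^{ρ*} (ω + β ρ² ω ω′)/(1 − β ρ ω) dρ
  = −ρ* ω(ρ*) − β⁻¹ log(1 − β ρ* ω(ρ*)) + ∫₀^{ρ*} ω`. -/
theorem stmt4 (β ρstar : ℝ) (ω : ℝ → ℝ)
    (hβ : 0 < β) (hρstar : 0 < ρstar)
    (hω : ContDiff ℝ 1 ω)
    (hpos : ∀ ρ ∈ Set.Icc (0 : ℝ) ρstar, 0 < 1 - β * ρ * ω ρ) :
    ∫ ρ in (0 : ℝ)..ρstar,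
        (ω ρ + β * ρ ^ 2 * ω ρ * deriv ω ρ) / (1 - β * ρ * ω ρ)
      = -(ρstar * ω ρstar) - β⁻¹ * Real.log (1 - β * ρstar * ω ρstar)
        + ∫ ρ in (0 : ℝ)..ρstar, ω ρ := by
  rw [integral_div_eq_logPotential_sub_add_integral hβ.ne' hω fun ρ hρ =>
    (hpos ρ (uIcc_of_le hρstar.le ▸ hρ)).ne']
  simp [logPotential]
end

section
/- For Gaussian signaling, the AMP capacity formula C = β⁻¹·log(1 + β·snr·v*) − log(v*) + v* − 1 with v* = 1 − snr⁻¹·𝓕/β equals the random-matrix Gaussian capacity C = log(1 + snr − 𝓕) + β⁻¹·log(1 + β·snr − 𝓕) − snr⁻¹·𝓕/β, where 𝓕 = (1/4)·(√(snr(1+√β)² + 1) − √(snr(1−√β)² + 1))². -/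
set_option maxHeartbeats 800000


/-- For Gaussian signaling, the AMP capacity formula
`β⁻¹ log(1 + β snr v*) − log v* + v* − 1` with `v* = 1 − snr⁻¹ 𝓕/β` equals the
random-matrix Gaussian capacity
`log(1 + snr − 𝓕) + β⁻¹ log(1 + β snr − 𝓕) − snr⁻¹ 𝓕/β`, where
`𝓕 = (1/4)(√(snr(1+√β)² + 1) − √(snr(1−√β)² + 1))²`. -/
theorem stmt7 (β snr : ℝ) (hβ : 0 < β) (hsnr : 0 < snr) :
    let F : ℝ := (1 / 4) * (Real.sqrt (snr * (1 + Real.sqrt β) ^ 2 + 1)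
      - Real.sqrt (snr * (1 - Real.sqrt β) ^ 2 + 1)) ^ 2
    let vstar : ℝ := 1 - snr⁻¹ * F / β
    β⁻¹ * Real.log (1 + β * snr * vstar) - Real.log vstar + vstar - 1
      = Real.log (1 + snr - F) + β⁻¹ * Real.log (1 + β * snr - F)
        - snr⁻¹ * F / β := by
  intro F vstar
  have hFdef : F = (1 / 4) * (Real.sqrt (snr * (1 + Real.sqrt β) ^ 2 + 1)
      - Real.sqrt (snr * (1 - Real.sqrt β) ^ 2 + 1)) ^ 2 := rfl
  have hvdef : vstar = 1 - snr⁻¹ * F / β := rfl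
  clear_value vstar F
  set s := Real.sqrt β with hs_def
  have hs : s ^ 2 = β := Real.sq_sqrt hβ.le
  set a := Real.sqrt (snr * (1 + s) ^ 2 + 1) with ha_def
  set b := Real.sqrt (snr * (1 - s) ^ 2 + 1) with hb_def
  have ha2 : a ^ 2 = snr * (1 + s) ^ 2 + 1 := Real.sq_sqrt (by positivity)
  have hb2 : b ^ 2 = snr * (1 - s) ^ 2 + 1 := Real.sq_sqrt (by positivity)
  have ha1 : (1 : ℝ) ≤ a := by
    rw [show (1:ℝ) = Real.sqrt 1 from Real.sqrt_one.symm]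
    apply Real.sqrt_le_sqrt; nlinarith [sq_nonneg (1 + s)]
  have hb1 : (1 : ℝ) ≤ b := by
    rw [show (1:ℝ) = Real.sqrt 1 from Real.sqrt_one.symm]
    apply Real.sqrt_le_sqrt; nlinarith [sq_nonneg (1 - s)]
  have hab1 : (1 : ℝ) ≤ a * b := by nlinarith
  have habsq : (a * b) ^ 2 = (1 + snr + β * snr) ^ 2 - 4 * β * snr ^ 2 := by
    rw [mul_pow, ha2, hb2]
    linear_combination (snr ^ 2 * (s ^ 2 + β - 2) + 2 * snr) * hs
  have hsum : a ^ 2 + b ^ 2 = 2 * snr * (1 + β) + 2 := by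
    rw [ha2, hb2]; linear_combination 2 * snr * hs
  have hab : a * b = 1 + snr + β * snr - 2 * F := by
    have h4 : 4 * F = a ^ 2 + b ^ 2 - 2 * (a * b) := by rw [hFdef]; ring
    linarith
  have hkey : F ^ 2 - F * (1 + snr + β * snr) + β * snr ^ 2 = 0 := by
    linear_combination (1/4) * habsq - ((a * b + (1 + snr + β * snr) - 2 * F) / 4) * hab
  have hF0 : 0 ≤ F := by rw [hFdef]; positivity
  have hab_lb1 : β * snr - snr - 1 < a * b := by
    rcases le_or_gt (β * snr - snr - 1) 0 with h | h
    · linarith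
    · nlinarith [habsq, mul_pos hβ hsnr, hab1, h]
  have hab_lb2 : snr - β * snr - 1 < a * b := by
    rcases le_or_gt (snr - β * snr - 1) 0 with h | h
    · linarith
    · nlinarith [habsq, hsnr, hab1, h]
  have hpos1 : 0 < 1 + snr - F := by linarith [hab, hab_lb1]
  have hpos2 : 0 < 1 + β * snr - F := by linarith [hab, hab_lb2]
  have hmul : vstar * (1 + snr - F) = 1 := by
    rw [hvdef]
    field_simp
    linear_combination hkey
  have hv0 : 0 < vstar := by nlinarith [hmul, hpos1]
  have hvinv : vstar = (1 + snr - F)⁻¹ := eq_inv_of_mul_eq_one_left hmul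
  have hlogv : Real.log vstar = -Real.log (1 + snr - F) := by
    rw [hvinv, Real.log_inv]
  have hbsv : 1 + β * snr * vstar = 1 + β * snr - F := by
    rw [hvdef]; field_simp; ring
  have hvm1 : vstar - 1 = -(snr⁻¹ * F / β) := by rw [hvdef]; ring
  rw [hbsv, hlogv]
  linarith [hvm1]
end

section
/- For n ≥ 1 let aᵢ = 1/f⁻¹(1 − i/n) (i = 0, ..., n−1), where f is a continuous strictly monotone function and f⁻¹ is its inverse, with positive a₀ > a₁ > .... Then, as n → ∞, the sum of SCM layer rates Σ_{i=0}^{n−1} log(1 + (1/n)/(aᵢ + (n−i−1)/n)) converges to the integral ∫₀¹ dv/(1/f⁻¹(v) + v). -/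
open Filter

lemma aux_log_bounds {t : ℝ} (ht : 0 ≤ t) :
    t - t ^ 2 ≤ Real.log (1 + t) ∧ Real.log (1 + t) ≤ t := by
  have h1 : (0:ℝ) < 1 + t := by linarith
  constructor
  · have h2 := Real.one_sub_inv_le_log_of_pos h1
    have h3 : t - t ^ 2 ≤ 1 - (1 + t)⁻¹ := by
      nlinarith [mul_inv_cancel₀ h1.ne', inv_pos.2 h1, pow_nonneg ht 3]
    exact h3.trans h2
  · have := Real.log_le_sub_one_of_pos h1
    linarith

lemma aux_abs_inv_sub_inv {b u w : ℝ} (hb : 0 < b) (hu : 1 / b ≤ u) (hw : 1 / b ≤ w) :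
    |u⁻¹ - w⁻¹| ≤ b ^ 2 * |u - w| := by
  have hb' : (0:ℝ) < 1 / b := by positivity
  have hu0 : 0 < u := hb'.trans_le hu
  have hw0 : 0 < w := hb'.trans_le hw
  have key : u⁻¹ - w⁻¹ = (w - u) * (u⁻¹ * w⁻¹) := by field_simp
  have h1 : u⁻¹ ≤ b := by
    rw [inv_le_comm₀ hu0 hb]; simpa [one_div] using hu
  have h2 : w⁻¹ ≤ b := by
    rw [inv_le_comm₀ hw0 hb]; simpa [one_div] using hw
  calc |u⁻¹ - w⁻¹| = |u - w| * (u⁻¹ * w⁻¹) := by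
        rw [key, abs_mul, abs_sub_comm, abs_of_pos (by positivity : (0:ℝ) < u⁻¹ * w⁻¹)]
    _ ≤ |u - w| * (b * b) := by
        have := abs_nonneg (u - w)
        gcongr
    _ = b ^ 2 * |u - w| := by ring

set_option maxHeartbeats 2000000 in
/-- The `n`-layer SCM sum rate
`Rₙ = Σ_{i=0}^{n−1} log(1 + (1/n)/(1/f⁻¹(1 − i/n) + (n−i−1)/n))` converges, as
`n → ∞`, to `∫₀¹ (1/f⁻¹(v) + v)⁻¹ dv`, where `f : [a,b] → [0,1]` is a
continuous strictly decreasing bijection with inverse `f⁻¹`. -/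
theorem stmt16 (a b : ℝ) (ha : 0 < a) (hab : a < b) (f finv : ℝ → ℝ)
    (hf : ContinuousOn f (Set.Icc a b))
    (hanti : StrictAntiOn f (Set.Icc a b))
    (hfa : f b = 0) (hfb : f a = 1)
    (hmaps : ∀ v ∈ Set.Icc (0 : ℝ) 1, finv v ∈ Set.Icc a b)
    (hinv : ∀ v ∈ Set.Icc (0 : ℝ) 1, f (finv v) = v)
    (hinv' : ∀ ρ ∈ Set.Icc a b, finv (f ρ) = ρ) :
    Tendsto (fun n : ℕ => ∑ i ∈ Finset.range n,
        Real.log (1 + ((1 : ℝ) / n)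
          / (1 / finv (1 - (i : ℝ) / n) + ((n : ℝ) - i - 1) / n)))
      atTop (nhds (∫ v in (0 : ℝ)..1, (1 / finv v + v)⁻¹)) := by
  have hb : (0:ℝ) < b := ha.trans hab
  -- f maps [a,b] into [0,1]
  have hmapsf : ∀ ρ ∈ Set.Icc a b, f ρ ∈ Set.Icc (0:ℝ) 1 := by
    intro ρ hρ
    constructor
    · rw [← hfa]
      exact hanti.antitoneOn hρ (Set.right_mem_Icc.2 hab.le) hρ.2
    · rw [← hfb]
      exact hanti.antitoneOn (Set.left_mem_Icc.2 hab.le) hρ hρ.1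
  -- continuity of finv on [0,1] via compactness
  have hfinv_cont : ContinuousOn finv (Set.Icc (0:ℝ) 1) := by
    let e : Set.Icc a b ≃ Set.Icc (0:ℝ) 1 :=
      { toFun := fun x => ⟨f x, hmapsf x x.2⟩
        invFun := fun v => ⟨finv v, hmaps v v.2⟩
        left_inv := fun x => Subtype.ext (hinv' x x.2)
        right_inv := fun v => Subtype.ext (hinv v v.2) }
    have he : Continuous e :=
      Continuous.subtype_mk (continuousOn_iff_continuous_restrict.1 hf) _
    have : CompactSpace (Set.Icc a b) := isCompact_iff_compactSpace.1 isCompact_Icc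
    let homeo := Continuous.homeoOfEquivCompactToT2 (f := e) he
    rw [continuousOn_iff_continuous_restrict]
    exact continuous_subtype_val.comp homeo.symm.continuous
  have hfinv_pos : ∀ v ∈ Set.Icc (0:ℝ) 1, 0 < finv v :=
    fun v hv => ha.trans_le (hmaps v hv).1
  -- h = 1/finv
  set h : ℝ → ℝ := fun v => 1 / finv v with hh_def
  have hh_cont : ContinuousOn h (Set.Icc (0:ℝ) 1) :=
    continuousOn_const.div hfinv_cont (fun v hv => (hfinv_pos v hv).ne')
  have hh_lb : ∀ v ∈ Set.Icc (0:ℝ) 1, 1 / b ≤ h v := by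
    intro v hv
    exact one_div_le_one_div_of_le (hfinv_pos v hv) (hmaps v hv).2
  -- g
  set g : ℝ → ℝ := fun v => (1 / finv v + v)⁻¹ with hg_def
  have hden : ∀ v ∈ Set.Icc (0:ℝ) 1, 1 / b ≤ h v + v := by
    intro v hv
    have := hh_lb v hv
    have := hv.1
    linarith
  have hden_pos : ∀ v ∈ Set.Icc (0:ℝ) 1, 0 < h v + v := by
    intro v hv
    have := hden v hv
    have : (0:ℝ) < 1 / b := by positivity
    linarith [hden v hv]
  have hg_cont : ContinuousOn g (Set.Icc (0:ℝ) 1) :=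
    (hh_cont.add continuousOn_id).inv₀ (fun v hv => (hden_pos v hv).ne')
  have hh_unif : UniformContinuousOn h (Set.Icc (0:ℝ) 1) :=
    isCompact_Icc.uniformContinuousOn_of_continuous hh_cont
  rw [Metric.tendsto_atTop]
  intro ε hε
  -- modulus of uniform continuity
  have hε' : (0:ℝ) < ε / (2 * b ^ 2) := by positivity
  obtain ⟨δ, hδ, hmod⟩ := Metric.uniformContinuousOn_iff.1 hh_unif _ hε'
  obtain ⟨N₁, hN₁⟩ := exists_nat_gt (1 / δ)
  obtain ⟨N₂, hN₂⟩ := exists_nat_gt (8 * b ^ 2 / ε)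
  refine ⟨max (max N₁ N₂) 1, fun n hn => ?_⟩
  have hn1 : 1 ≤ n := le_trans (le_max_right _ 1) hn
  have hnN₁ : (N₁ : ℝ) ≤ n := Nat.cast_le.2 (le_trans (le_trans (le_max_left _ _) (le_max_left _ _)) hn)
  have hnN₂ : (N₂ : ℝ) ≤ n := Nat.cast_le.2 (le_trans (le_trans (le_max_right _ _) (le_max_left _ _)) hn)
  have hn0 : (0:ℝ) < n := by exact_mod_cast hn1
  have hinvn : 1 / (n:ℝ) < δ := by
    rw [div_lt_iff₀ hn0]
    have : 1 / δ < n := lt_of_lt_of_le hN₁ hnN₁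
    rw [div_lt_iff₀ hδ] at this
    nlinarith
  have h2bn : 2 * b ^ 2 / n < ε / 4 := by
    have : 8 * b ^ 2 / ε < n := lt_of_lt_of_le hN₂ hnN₂
    rw [div_lt_iff₀ hε] at this
    rw [div_lt_iff₀ hn0]
    nlinarith

  set ep : ℝ := ε / (2 * b ^ 2) with hep_def
  set C : ℝ := b ^ 2 / n + b ^ 2 * (ep + 1 / n) with hC_def
  -- membership of grid points
  have hgrid : ∀ j : ℕ, j ≤ n → ((j:ℝ)/n) ∈ Set.Icc (0:ℝ) 1 := by
    intro j hj
    constructor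
    · positivity
    · rw [div_le_one hn0]; exact_mod_cast hj
  -- integrability on subintervals
  have hsub : ∀ j : ℕ, j < n → Set.uIcc ((j:ℝ)/n) (((j:ℝ)+1)/n) ⊆ Set.Icc (0:ℝ) 1 := by
    intro j hj
    rw [Set.uIcc_of_le (by rw [div_le_div_iff₀ hn0 hn0]; nlinarith)]
    intro x hx
    have h1 := (hgrid j hj.le).1
    have h2 : (((j:ℝ)+1)/n) ≤ 1 := by
      have : ((j:ℝ)+1) = ((j+1 : ℕ) : ℝ) := by push_cast; ring
      rw [this]
      exact (hgrid (j+1) hj).2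
    exact ⟨le_trans h1 hx.1, le_trans hx.2 h2⟩
  have hint : ∀ j : ℕ, j < n →
      IntervalIntegrable g MeasureTheory.volume ((j:ℝ)/n) (((j:ℝ)+1)/n) := by
    intro j hj
    exact (hg_cont.mono (hsub j hj)).intervalIntegrable
  -- split the integral
  have hIsplit : (∫ v in (0:ℝ)..1, (1 / finv v + v)⁻¹)
      = ∑ j ∈ Finset.range n, ∫ x in ((j:ℝ)/n)..(((j:ℝ)+1)/n), g x := by
    have hint' : ∀ k < n, IntervalIntegrable g MeasureTheory.volume
        ((fun k : ℕ => (k:ℝ)/n) k) ((fun k : ℕ => (k:ℝ)/n) (k+1)) := by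
      intro k hk
      show IntervalIntegrable g MeasureTheory.volume ((k:ℝ)/n) (((k+1:ℕ):ℝ)/n)
      have e1 : ((k+1:ℕ):ℝ)/(n:ℝ) = ((k:ℝ)+1)/n := by push_cast; ring
      rw [e1]
      exact hint k hk
    have key := intervalIntegral.sum_integral_adjacent_intervals hint'
    have e1 : ∀ k : ℕ, ((k+1:ℕ):ℝ)/(n:ℝ) = ((k:ℝ)+1)/n := by intro k; push_cast; ring
    calc (∫ v in (0:ℝ)..1, (1 / finv v + v)⁻¹)
        = ∫ x in (((0:ℕ):ℝ)/n)..(((n:ℕ):ℝ)/n), g x := by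
          rw [show (((0:ℕ):ℝ)/n) = (0:ℝ) by norm_num,
            show (((n:ℕ):ℝ)/n) = (1:ℝ) from div_self hn0.ne']
      _ = ∑ k ∈ Finset.range n, ∫ x in ((k:ℝ)/n)..(((k+1:ℕ):ℝ)/n), g x := key.symm
      _ = ∑ j ∈ Finset.range n, ∫ x in ((j:ℝ)/n)..(((j:ℝ)+1)/n), g x := by
          refine Finset.sum_congr rfl fun k _ => ?_
          rw [e1]
  -- rewrite the sum by reflection
  have hsum : (∑ i ∈ Finset.range n, Real.log (1 + ((1 : ℝ) / n)
          / (1 / finv (1 - (i : ℝ) / n) + ((n : ℝ) - i - 1) / n)))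
      = ∑ j ∈ Finset.range n,
          Real.log (1 + ((1:ℝ)/n) / (h (((j:ℝ)+1)/n) + (j:ℝ)/n)) := by
    rw [← Finset.sum_range_reflect
      (fun j => Real.log (1 + ((1:ℝ)/n) / (h (((j:ℝ)+1)/n) + (j:ℝ)/n))) n]
    refine Finset.sum_congr rfl fun i hi => ?_
    have hi' := Finset.mem_range.1 hi
    have c1 : ((n - 1 - i : ℕ) : ℝ) = (n:ℝ) - 1 - i := by
      rw [Nat.sub_sub]
      push_cast [Nat.cast_sub (show 1 + i ≤ n by omega)]
      ring
    simp only [c1, hh_def]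
    have e1 : ((n:ℝ) - 1 - i + 1)/n = 1 - (i:ℝ)/n := by
      field_simp
      ring
    have e2 : ((n:ℝ) - 1 - i)/n = ((n:ℝ) - i - 1)/n := by ring
    rw [e1, e2]
  -- per-term bound
  have hterm : ∀ j ∈ Finset.range n,
      |Real.log (1 + ((1:ℝ)/n) / (h (((j:ℝ)+1)/n) + (j:ℝ)/n))
        - ∫ x in ((j:ℝ)/n)..(((j:ℝ)+1)/n), g x| ≤ C * (1/n) := by
    intro j hj
    have hjn := Finset.mem_range.1 hj
    set xj : ℝ := (j:ℝ)/n with hxj_def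
    set yj : ℝ := ((j:ℝ)+1)/n with hyj_def
    have hxy : xj ≤ yj := by
      rw [hxj_def, hyj_def, div_le_div_iff₀ hn0 hn0]; nlinarith
    have hylen : yj - xj = 1/n := by rw [hxj_def, hyj_def]; ring
    have hyj_mem : yj ∈ Set.Icc (0:ℝ) 1 := by
      have : yj = ((j+1:ℕ):ℝ)/n := by push_cast; ring
      rw [this]; exact hgrid (j+1) hjn
    have hxj_mem : xj ∈ Set.Icc (0:ℝ) 1 := hgrid j hjn.le
    set D : ℝ := h yj + xj with hD_def
    have hD : 1/b ≤ D := by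
      have h1 := hh_lb yj hyj_mem
      have h2 := hxj_mem.1
      rw [hD_def]; linarith
    have hbpos : (0:ℝ) < 1/b := by positivity
    have hD0 : (0:ℝ) < D := hbpos.trans_le hD
    have hDinv : D⁻¹ ≤ b := by
      rw [inv_le_comm₀ hD0 hb]; simpa [one_div] using hD
    set t : ℝ := (1/(n:ℝ))/D with ht_def
    have ht0 : 0 ≤ t := by positivity
    have htb : t ≤ b/n := by
      calc t = (1/(n:ℝ)) * D⁻¹ := by rw [ht_def, div_eq_mul_inv]
        _ ≤ (1/(n:ℝ)) * b := mul_le_mul_of_nonneg_left hDinv (by positivity)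
        _ = b/n := by ring
    have hnt : (n:ℝ) * t = D⁻¹ := by
      rw [ht_def]; field_simp
    -- rewrite L j as an integral of a constant
    have hLconst : Real.log (1 + t)
        = ∫ _ in xj..yj, ((n:ℝ) * Real.log (1 + t)) := by
      rw [intervalIntegral.integral_const, smul_eq_mul, hylen]
      field_simp
    -- pointwise bound
    have hpt : ∀ x ∈ Set.uIoc xj yj, ‖(n:ℝ) * Real.log (1 + t) - g x‖ ≤ C := by
      intro x hx
      rw [Set.uIoc_of_le hxy] at hx
      have hx_mem : x ∈ Set.Icc (0:ℝ) 1 :=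
        ⟨le_trans hxj_mem.1 hx.1.le, le_trans hx.2 hyj_mem.2⟩
      have hEx : 1/b ≤ h x + x := hden x hx_mem
      have hEx0 : (0:ℝ) < h x + x := hbpos.trans_le hEx
      have hgx : g x = (h x + x)⁻¹ := rfl
      rw [Real.norm_eq_abs]
      have hlog := aux_log_bounds ht0
      -- part 1
      have hp1 : |(n:ℝ) * Real.log (1 + t) - (n:ℝ) * t| ≤ b ^ 2 / n := by
        rw [abs_sub_comm, abs_of_nonneg (by nlinarith [hlog.2])]
        have : (n:ℝ) * t - (n:ℝ) * Real.log (1+t) ≤ (n:ℝ) * t ^ 2 := by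
          nlinarith [hlog.1]
        refine le_trans this ?_
        have : t ^ 2 ≤ (b/n)^2 := by nlinarith
        calc (n:ℝ) * t ^ 2 ≤ (n:ℝ) * (b/n)^2 := by nlinarith
          _ = b^2/n * (n/n) := by ring
          _ = b^2/n := by rw [div_self hn0.ne', mul_one]
      -- part 2
      have hmodx : |h yj - h x| ≤ ep := by
        have hd : dist yj x < δ := by
          rw [Real.dist_eq, abs_of_nonneg (by linarith [hx.2])]
          calc yj - x < yj - xj := by linarith [hx.1]
            _ = 1/n := hylen
            _ < δ := hinvn
        have := hmod yj hyj_mem x hx_mem hd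
        rw [Real.dist_eq] at this
        exact this.le
      have hp2 : |(n:ℝ) * t - g x| ≤ b ^ 2 * (ep + 1/n) := by
        rw [hnt, hgx]
        refine le_trans (aux_abs_inv_sub_inv hb hD hEx) ?_
        have hDdiff : |D - (h x + x)| ≤ ep + 1/n := by
          have : D - (h x + x) = (h yj - h x) + (xj - x) := by rw [hD_def]; ring
          rw [this]
          refine le_trans (abs_add_le _ _) ?_
          have h3 : |xj - x| ≤ 1/n := by
            rw [abs_of_nonpos (by linarith [hx.1])]
            linarith [hx.2, hylen]
          linarith [hmodx]
        nlinarith [abs_nonneg (D - (h x + x)), sq_nonneg b]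
      calc |(n:ℝ) * Real.log (1 + t) - g x|
          ≤ |(n:ℝ) * Real.log (1 + t) - (n:ℝ) * t| + |(n:ℝ) * t - g x| :=
            abs_sub_le _ _ _
        _ ≤ C := by rw [hC_def]; linarith [hp1, hp2]
    -- combine
    have hIint := hint j hjn
    have hsplit : Real.log (1 + t) - (∫ x in xj..yj, g x)
        = ∫ x in xj..yj, ((n:ℝ) * Real.log (1 + t) - g x) := by
      rw [intervalIntegral.integral_sub intervalIntegrable_const hIint, ← hLconst]
    rw [hsplit]
    have := intervalIntegral.norm_integral_le_of_norm_le_const hpt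
    rw [Real.norm_eq_abs] at this
    refine le_trans this ?_
    rw [hylen, abs_of_nonneg (by positivity : (0:ℝ) ≤ 1/n)]
  -- put everything together
  rw [Real.dist_eq, hsum, hIsplit, ← Finset.sum_sub_distrib]
  calc |∑ j ∈ Finset.range n, (Real.log (1 + ((1:ℝ)/n) / (h (((j:ℝ)+1)/n) + (j:ℝ)/n))
        - ∫ x in ((j:ℝ)/n)..(((j:ℝ)+1)/n), g x)|
      ≤ ∑ j ∈ Finset.range n, |Real.log (1 + ((1:ℝ)/n) / (h (((j:ℝ)+1)/n) + (j:ℝ)/n))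
        - ∫ x in ((j:ℝ)/n)..(((j:ℝ)+1)/n), g x| := Finset.abs_sum_le_sum_abs _ _
    _ ≤ ∑ _j ∈ Finset.range n, C * (1/n) := Finset.sum_le_sum hterm
    _ = n * (C * (1/n)) := by rw [Finset.sum_const, Finset.card_range, nsmul_eq_mul]
    _ = C * (n/n) := by ring
    _ = C := by rw [div_self hn0.ne', mul_one]
    _ < ε := by
        rw [hC_def, hep_def]
        have h4 : b ^ 2 * (ε / (2 * b ^ 2) + 1 / n) = ε / 2 + b ^ 2 / n := by
          field_simp
        have h5 : 2 * b ^ 2 / (n:ℝ) = 2 * (b ^ 2 / n) := by ring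
        rw [h4]
        rw [h5] at h2bn
        linarith
end
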